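/- Every coordinate of every positive root lies in the subsemiring of ℝ generated by the constants sin(π n / m) / sin(π / m), where m ranges over the nonzero entries M s t (s, t ∈ B, M s t ≠ 0) and n ranges over the integers with 1 ≤ n ≤ m/2. (Equivalently, every such coordinate is a polynomial with natural-number coefficients in these constants.) -/

import Mathlib

open Real

variable {B : Type*}

/-- The pairing constant `⟨α_s, α_t⟩` of the standard bilinear form:
`-cos (π / M s t)` if `M s t ≠ 0`, and `-1` if `M s t = 0` (i.e. `m_{s,t} = ∞`). -/
noncomputable def pairing (M : CoxeterMatrix B) (s t : B) : ℝ :=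
  if M s t = 0 then -1 else -Real.cos (Real.pi / (M s t : ℝ))

/-- The standard symmetric bilinear form on `V = B → ℝ`. -/
noncomputable def form [Fintype B] (M : CoxeterMatrix B) (v w : B → ℝ) : ℝ :=
  ∑ s, ∑ t, v s * w t * pairing M s t

/-- The simple root `α_s`, i.e. the standard basis vector at `s`. -/
noncomputable def sroot [DecidableEq B] (s : B) : B → ℝ := Pi.single s 1

/-- `λ` is a root: `λ = ρ(w) α_s` for some `w ∈ W`, `s ∈ B`. -/
def IsRoot [DecidableEq B] (M : CoxeterMatrix B)
    (ρ : M.Group →* Module.End ℝ (B → ℝ)) (lam : B → ℝ) : Prop :=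
  ∃ (w : M.Group) (s : B), ρ w (sroot s) = lam

/-- `λ` is positive: all coordinates are nonnegative. -/
def IsPos (lam : B → ℝ) : Prop := ∀ s, 0 ≤ lam s

/-- `λ` is negative: all coordinates are nonpositive. -/
def IsNeg (lam : B → ℝ) : Prop := ∀ s, lam s ≤ 0

/-- `λ` is a positive root. -/
def IsPosRoot [DecidableEq B] (M : CoxeterMatrix B)
    (ρ : M.Group →* Module.End ℝ (B → ℝ)) (lam : B → ℝ) : Prop :=
  IsRoot M ρ lam ∧ IsPos lam

/-- `λ` dominates `μ`: for every `w ∈ W`, if `ρ(w) μ` is positive then so is `ρ(w) λ`. -/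
def Dominates (M : CoxeterMatrix B)
    (ρ : M.Group →* Module.End ℝ (B → ℝ)) (lam mu : B → ℝ) : Prop :=
  ∀ w : M.Group, IsPos (ρ w mu) → IsPos (ρ w lam)

/-- `λ` is a minimal root: a positive root dominating no positive root other than itself. -/
def IsMinimal [DecidableEq B] (M : CoxeterMatrix B)
    (ρ : M.Group →* Module.End ℝ (B → ℝ)) (lam : B → ℝ) : Prop :=
  IsPosRoot M ρ lam ∧
    ∀ mu, IsPosRoot M ρ mu → Dominates M ρ lam mu → mu = lam

/-- The depth `δ(λ)` of a positive root:
the least Coxeter length of a `w ∈ W` with `ρ(w⁻¹) λ` negative. -/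
noncomputable def depth (M : CoxeterMatrix B)
    (ρ : M.Group →* Module.End ℝ (B → ℝ)) (lam : B → ℝ) : ℕ :=
  sInf {n | ∃ w : M.Group, IsNeg (ρ w⁻¹ lam) ∧ M.toCoxeterSystem.length w = n}

/-- The partial order `λ ⪯ μ` on positive roots:
`μ = ρ(w) λ` for some `w` with `δ(μ) = ℓ(w) + δ(λ)`. -/
def PLE (M : CoxeterMatrix B)
    (ρ : M.Group →* Module.End ℝ (B → ℝ)) (lam mu : B → ℝ) : Prop :=
  ∃ w : M.Group, mu = ρ w lam ∧
    depth M ρ mu = M.toCoxeterSystem.length w + depth M ρ lam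

/-- The Coxeter graph of `M`: distinct `s`, `t` are adjacent iff `M s t ≥ 3` or `M s t = 0`. -/
def coxGraph (M : CoxeterMatrix B) : SimpleGraph B where
  Adj s t := s ≠ t ∧ (M s t = 0 ∨ 3 ≤ M s t)
  symm := by
    constructor
    intro s t h
    exact ⟨h.1.symm, by rw [M.symmetric t s]; exact h.2⟩
  loopless := by constructor; intro s h; exact h.1 rfl

/-- The support of a vector `λ ∈ V`. -/
def supp (lam : B → ℝ) : Set B := {s | lam s ≠ 0}

/-!
Induct on `ℓ(w)` to show that the coordinates of `ρ(w) α_s` lie in the semiring whenever `s` is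
not a right descent of `w`. If `w ≠ 1`, pick a right descent `t`; then `w = u · (⋯ s t)` with an
alternating factor of length `k < m_{s,t}` and `ℓ(w) = ℓ(u) + k`, where neither `s` nor `t` is a
right descent of `u` (take `k` maximal). In the dihedral group `⟨s, t⟩`,
`ρ(⋯ s t) α_s = a α_s + b α_t` with `a, b` Chebyshev values `U_j(cos (π / m))` for `-1 ≤ j < m`,
that is, `sin ((j + 1) π / m) / sin (π / m)` (or `j + 1` when `m = ∞`); the roots `ρ(u) α_s`
and `ρ(u) α_t` are handled by induction.
Every root is `±ρ(w) α_s` for such a `w`, and the semiring consists of nonnegative reals, which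
settles the sign for positive roots.
-/

open Polynomial Polynomial.Chebyshev

def sinRatios (M : CoxeterMatrix B) : Set ℝ :=
  {x : ℝ | ∃ u v : B, M u v ≠ 0 ∧ ∃ n : ℕ, 1 ≤ n ∧ 2 * n ≤ M u v ∧
    x = Real.sin (Real.pi * n / (M u v : ℝ)) / Real.sin (Real.pi / (M u v : ℝ))}

namespace sinRatios

variable {M : CoxeterMatrix B}

lemma nonneg {x : ℝ} (hx : x ∈ sinRatios M) : 0 ≤ x := by
  obtain ⟨u, v, -, n, hn, hnm, rfl⟩ := hx
  have hm : (0 : ℝ) < M u v := by exact_mod_cast (by omega : 0 < M u v)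
  have hn' : (1 : ℝ) ≤ n := by exact_mod_cast hn
  have hnm' : (n : ℝ) ≤ M u v := by exact_mod_cast (by omega : n ≤ M u v)
  refine div_nonneg (sin_nonneg_of_nonneg_of_le_pi (by positivity) ?_)
    (sin_nonneg_of_nonneg_of_le_pi (by positivity) ?_)
  · rw [mul_div_assoc]
    exact mul_le_of_le_one_right pi_pos.le ((div_le_one hm).mpr hnm')
  · exact div_le_self pi_pos.le (hn'.trans hnm')

lemma nonneg_of_mem_closure {x : ℝ} (hx : x ∈ Subsemiring.closure (sinRatios M)) : 0 ≤ x :=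
  Subsemiring.mem_nonneg.mp <|
    Subsemiring.closure_le.mpr (fun _ hy => Subsemiring.mem_nonneg.mpr (nonneg hy)) hx

lemma sin_div_sin_mem_closure {u v : B} (huv : M u v ≠ 0) {k : ℕ} (hk : k ≤ M u v) :
    Real.sin (Real.pi * k / M u v) / Real.sin (Real.pi / M u v) ∈
      Subsemiring.closure (sinRatios M) := by
  -- `sin (π k / m) = sin (π (m - k) / m)` reduces to `2 k ≤ m`
  wlog h2k : 2 * k ≤ M u v generalizing k
  · have hm : (M u v : ℝ) ≠ 0 := by exact_mod_cast huv
    rw [show Real.pi * k / M u v = Real.pi - Real.pi * ↑(M u v - k) / M u v by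
      rw [Nat.cast_sub hk]; field_simp; ring, sin_pi_sub]
    exact this (by omega) (by omega)
  rcases Nat.eq_zero_or_pos k with rfl | hk1
  · simp
  · exact Subsemiring.subset_closure ⟨u, v, huv, k, hk1, h2k, rfl⟩

end sinRatios

lemma pairing_symm (M : CoxeterMatrix B) (s t : B) : pairing M s t = pairing M t s := by
  rw [pairing, pairing, M.symmetric]

lemma pairing_self (M : CoxeterMatrix B) (s : B) : pairing M s s = 1 := by
  simp [pairing]

lemma chebyshevU_eval_neg_pairing_mem_closure {M : CoxeterMatrix B} {s t : B} (hst : s ≠ t)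
    {n : ℤ} (hn : -1 ≤ n) (hnm : M s t ≠ 0 → n < M s t) :
    (U ℝ n).eval (-pairing M s t) ∈ Subsemiring.closure (sinRatios M) := by
  obtain ⟨j, hj⟩ := Int.eq_ofNat_of_zero_le (by omega : 0 ≤ n + 1)
  have hj' : (n : ℝ) + 1 = j := by exact_mod_cast hj
  by_cases hm : M s t = 0
  · simp only [pairing, hm, if_true, neg_neg, U_eval_one, hj']
    exact natCast_mem _ j
  have hm2 : (2 : ℝ) ≤ M s t := by
    exact_mod_cast (by have := M.off_diagonal s t hst; omega : 2 ≤ M s t)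
  have hsin : Real.sin (Real.pi / M s t) ≠ 0 :=
    (sin_pos_of_pos_of_lt_pi (by positivity) (div_lt_self pi_pos (by linarith))).ne'
  simp only [pairing, hm, if_false, neg_neg]
  rw [eq_div_of_mul_eq hsin (U_real_cos _ n), hj', ← mul_div_assoc, mul_comm (j : ℝ)]
  exact sinRatios.sin_div_sin_mem_closure hm (by have := hnm hm; omega)

namespace CoxeterSystem

variable {W : Type*} [Group W] {M : CoxeterMatrix B} (cs : CoxeterSystem M W)

lemma simple_mul_wordProd_alternatingWord {s t r : B} (hr : r = s ∨ r = t) {k : ℕ} (hk : 1 ≤ k) :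
    cs.simple r * cs.wordProd (alternatingWord s t k) = cs.wordProd (alternatingWord s t (k + 1)) ∨
      cs.simple r * cs.wordProd (alternatingWord s t k) =
        cs.wordProd (alternatingWord s t (k - 1)) := by
  obtain ⟨j, rfl⟩ := Nat.exists_eq_add_of_le' hk
  rw [Nat.add_sub_cancel, alternatingWord_succ' s t (j + 1), alternatingWord_succ' s t j]
  rcases Nat.even_or_odd j with hj | hj
  · rcases hr with rfl | rfl <;> simp [hj, Nat.even_add_one, wordProd_cons]
  · rcases hr with rfl | rfl <;> simp [Nat.not_even_iff_odd.mpr hj, hj, wordProd_cons]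

lemma length_mul_wordProd_alternatingWord_le (u : W) (s t : B) (k : ℕ) :
    cs.length (u * cs.wordProd (alternatingWord s t k)) ≤ cs.length u + k :=
  (cs.length_mul_le _ _).trans <| Nat.add_le_add_left
    ((cs.length_wordProd_le _).trans_eq (length_alternatingWord s t k)) _

lemma isReduced_of_length_eq_add {w u : W} {ω : List B} (hw : w = u * cs.wordProd ω)
    (hlen : cs.length w = cs.length u + ω.length) : cs.IsReduced ω :=
  le_antisymm (cs.length_wordProd_le ω) <| by
    have := cs.length_mul_le u (cs.wordProd ω)
    rw [← hw] at this
    omega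

lemma exists_alternatingWord_factorization_succ {w u : W} {s t r : B} {k : ℕ} (hk : 1 ≤ k)
    (hw : w = u * cs.wordProd (alternatingWord s t k)) (hlen : cs.length w = cs.length u + k)
    (hr : r = s ∨ r = t) (hu : cs.IsRightDescent u r) :
    ∃ u', w = u' * cs.wordProd (alternatingWord s t (k + 1)) ∧
      cs.length w = cs.length u' + (k + 1) := by
  rw [cs.isRightDescent_iff] at hu
  have hw' : w = u * cs.simple r * (cs.simple r * cs.wordProd (alternatingWord s t k)) := by
    rw [hw, mul_assoc, simple_mul_simple_cancel_left]
  rcases cs.simple_mul_wordProd_alternatingWord hr hk with hext | hcancel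
  · exact ⟨u * cs.simple r, hext ▸ hw', by omega⟩
  · have := cs.length_mul_wordProd_alternatingWord_le (u * cs.simple r) s t (k - 1)
    rw [← hcancel, ← hw'] at this
    omega

lemma isRightDescent_of_eq_mul_braidWord {w u : W} {s t : B} (hst : M s t ≠ 0)
    (hw : w = u * cs.wordProd (alternatingWord s t (M s t)))
    (hlen : cs.length w = cs.length u + M s t) : cs.IsRightDescent w s := by
  obtain ⟨m, hm⟩ := Nat.exists_eq_add_of_le' (Nat.one_le_iff_ne_zero.mpr hst)
  have hbraid := cs.wordProd_braidWord_eq s t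
  unfold braidWord at hbraid
  rw [M.symmetric t s, hm, alternatingWord_succ t s, wordProd_concat] at hbraid
  have hws : w * cs.simple s = u * cs.wordProd (alternatingWord s t m) := by
    rw [hw, hm, hbraid, ← mul_assoc, simple_mul_simple_cancel_right]
  have := cs.length_mul_wordProd_alternatingWord_le u s t m
  rw [IsRightDescent, hws]
  omega

theorem exists_alternatingWord_factorization {w : W} {s t : B} (hs : ¬cs.IsRightDescent w s)
    (ht : cs.IsRightDescent w t) :
    ∃ u k, w = u * cs.wordProd (alternatingWord s t k) ∧ cs.length w = cs.length u + k ∧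
      1 ≤ k ∧ (M s t ≠ 0 → k < M s t) ∧ ¬cs.IsRightDescent u s ∧ ¬cs.IsRightDescent u t := by
  classical
  let P k := ∃ u, w = u * cs.wordProd (alternatingWord s t k) ∧ cs.length w = cs.length u + k
  rw [isRightDescent_iff] at ht
  have hP1 : P 1 := ⟨w * cs.simple t, by simp [alternatingWord], ht.symm⟩
  have hk1 : 1 ≤ Nat.findGreatest P (cs.length w) := Nat.le_findGreatest (by omega) hP1
  obtain ⟨u, hwu, hlen⟩ : P (Nat.findGreatest P (cs.length w)) :=
    Nat.findGreatest_spec (by omega) hP1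
  set k := Nat.findGreatest P (cs.length w)
  have hmax : ¬P (k + 1) := fun ⟨u', hwu', hlen'⟩ =>
    Nat.findGreatest_is_greatest (Nat.lt_succ_self k) (by omega) ⟨u', hwu', hlen'⟩
  refine ⟨u, k, hwu, hlen, hk1, fun hm => ?_,
    fun hu => hmax (cs.exists_alternatingWord_factorization_succ hk1 hwu hlen (.inl rfl) hu),
    fun hu => hmax (cs.exists_alternatingWord_factorization_succ hk1 hwu hlen (.inr rfl) hu)⟩
  rcases lt_trichotomy k (M s t) with hlt | heq | hgt
  · exact hlt
  · exact absurd (cs.isRightDescent_of_eq_mul_braidWord hm (heq ▸ hwu) (heq ▸ hlen)) hs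
  · exact absurd (cs.isReduced_of_length_eq_add hwu (by rwa [length_alternatingWord]))
      (cs.not_isReduced_alternatingWord s t hm hgt)

end CoxeterSystem

section Representation

open CoxeterSystem

variable [DecidableEq B] [Fintype B] {M : CoxeterMatrix B} {ρ : M.Group →* Module.End ℝ (B → ℝ)}
  (hρ : ∀ (s : B) (v : B → ℝ), ρ (M.simple s) v = v - (2 * form M v (sroot s)) • sroot s)

lemma form_sroot_sroot (s t : B) : form M (sroot s) (sroot t) = pairing M s t := by
  simp [form, sroot, Pi.single_apply]

include hρ in
lemma rho_simple_sroot (s t : B) :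
    ρ (M.simple s) (sroot t) = sroot t - (2 * pairing M t s) • sroot s := by
  rw [hρ, form_sroot_sroot]

include hρ in
lemma rho_wordProd_alternatingWord_sroot (s t : B) (k : ℕ) :
    ρ (M.toCoxeterSystem.wordProd (alternatingWord s t k)) (sroot s) =
      if Even k then
        (U ℝ k).eval (-pairing M s t) • sroot s + (U ℝ (k - 1)).eval (-pairing M s t) • sroot t
      else
        (U ℝ (k - 1)).eval (-pairing M s t) • sroot s +
          (U ℝ k).eval (-pairing M s t) • sroot t := by
  induction k with
  | zero => simp [alternatingWord]
  | succ k ih =>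
    have hrec := congrArg (eval (-pairing M s t)) (U_add_one ℝ k)
    simp only [eval_sub, eval_mul, eval_ofNat, eval_X] at hrec
    rw [alternatingWord_succ', wordProd_cons, map_mul, Module.End.mul_apply,
      M.toCoxeterSystem_simple, ih]
    rcases Nat.even_or_odd k with hk | hk
    · simp only [hk, Nat.even_add_one, if_true, not_true, if_false, map_add, map_smul,
        rho_simple_sroot hρ, pairing_self, Nat.cast_succ, add_sub_cancel_right, hrec]
      module
    · simp only [Nat.not_even_iff_odd.mpr hk, Nat.even_add_one, if_true, not_false_eq_true,
        if_false, map_add, map_smul, rho_simple_sroot hρ, pairing_self, Nat.cast_succ,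
        add_sub_cancel_right, hrec, pairing_symm M t s]
      module

include hρ in
theorem rho_sroot_apply_mem_closure_sinRatios {w : M.Group} {s : B}
    (hs : ¬M.toCoxeterSystem.IsRightDescent w s) (x : B) :
    ρ w (sroot s) x ∈ Subsemiring.closure (sinRatios M) := by
  set cs := M.toCoxeterSystem
  induction hn : cs.length w using Nat.strong_induction_on generalizing w s with
  | _ n ih =>
  by_cases hw : w = 1
  · subst hw
    by_cases hx : x = s <;> simp [sroot, hx]
  obtain ⟨t, ht⟩ := cs.exists_rightDescent_of_ne_one hw
  have hst : s ≠ t := fun h => hs (h ▸ ht)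
  obtain ⟨u, k, rfl, hlen, hk1, hkm, hus, hut⟩ := cs.exists_alternatingWord_factorization hs ht
  have hU : ∀ n : ℤ, -1 ≤ n → n ≤ k →
      (U ℝ n).eval (-pairing M s t) ∈ Subsemiring.closure (sinRatios M) := fun n hn1 hnk =>
    chebyshevU_eval_neg_pairing_mem_closure hst hn1 fun hm => by have := hkm hm; omega
  have hcomb : ∀ a b : ℝ, a ∈ Subsemiring.closure (sinRatios M) →
      b ∈ Subsemiring.closure (sinRatios M) →
      ρ u (a • sroot s + b • sroot t) x ∈ Subsemiring.closure (sinRatios M) := by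
    intro a b ha hb
    simp only [map_add, map_smul, Pi.add_apply, Pi.smul_apply, smul_eq_mul]
    exact add_mem (mul_mem ha (ih _ (by omega) hus rfl)) (mul_mem hb (ih _ (by omega) hut rfl))
  rw [map_mul, Module.End.mul_apply, rho_wordProd_alternatingWord_sroot hρ]
  split_ifs <;> exact hcomb _ _ (hU _ (by omega) (by omega)) (hU _ (by omega) (by omega))

end Representation

theorem statement10 [DecidableEq B] [Fintype B] (M : CoxeterMatrix B)
    (ρ : M.Group →* Module.End ℝ (B → ℝ))
    (hρ : ∀ (s : B) (v : B → ℝ),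
      ρ (M.simple s) v = v - (2 * form M v (sroot s)) • sroot s)
    (lam : B → ℝ) (hlam : IsPosRoot M ρ lam) (s : B) :
    lam s ∈ Subsemiring.closure {x : ℝ | ∃ u v : B, M u v ≠ 0 ∧ ∃ n : ℕ,
      1 ≤ n ∧ 2 * n ≤ M u v ∧
      x = Real.sin (Real.pi * n / (M u v : ℝ)) / Real.sin (Real.pi / (M u v : ℝ))} := by
  obtain ⟨⟨w, r, rfl⟩, hpos⟩ := hlam
  by_cases hr : M.toCoxeterSystem.IsRightDescent w r
  · -- then `ρ w α_r = -ρ (w s_r) α_r` has coordinates both `≥ 0` and `≤ 0`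
    have hneg : ρ (w * M.simple r) (sroot r) = -ρ w (sroot r) := by
      rw [map_mul, Module.End.mul_apply, rho_simple_sroot hρ, pairing_self, map_sub, map_smul]
      module
    have hle := sinRatios.nonneg_of_mem_closure <| rho_sroot_apply_mem_closure_sinRatios hρ
      ((M.toCoxeterSystem.isRightDescent_iff_not_isRightDescent_mul).mp hr) s
    rw [M.toCoxeterSystem_simple, hneg, Pi.neg_apply] at hle
    rw [le_antisymm (neg_nonneg.mp hle) (hpos s)]
    exact zero_mem _
  · exact rho_sroot_apply_mem_closure_sinRatios hρ hr s
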